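/- arXiv:1903.02523 — 5 statements merged into one kernel-verified Lean document; each statement's English description precedes it below -/
import Mathlib

section
/- For every vertex v of a finite simple graph G, the inductive dimension of the unit ball at v equals one plus the inductive dimension of the unit sphere at v: dim B_G(v) = 1 + dim S_G(v). -/
open Classical in
/-- The Knill inductive dimension of the subgraph of `G` induced on the
finite vertex set `A`: the empty graph has dimension `-1`, and otherwise
`dim = (1/|A|) · Σ_{v ∈ A} (1 + dim S(v))`, where the sphere `S(v)` is the
induced subgraph on the neighbors of `v` inside `A`. -/
noncomputable def gdim {V : Type*} (G : SimpleGraph V) (A : Finset V) : ℚ :=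
  if A.card = 0 then -1
  else (A.card : ℚ)⁻¹ *
    ∑ v ∈ A.attach, (1 + gdim G (A.filter (fun u => G.Adj v.1 u)))
termination_by A.card
decreasing_by
  apply Finset.card_lt_card
  refine ⟨Finset.filter_subset _ _, fun hsub => ?_⟩
  have hv := hsub v.2
  rw [Finset.mem_filter] at hv
  exact G.irrefl hv.2

open Classical in
theorem gdim_cone {V : Type*} [DecidableEq V] (G : SimpleGraph V) (v : V) :
    ∀ A : Finset V, v ∉ A → (∀ u ∈ A, G.Adj v u) →
      gdim G (insert v A) = 1 + gdim G A := by
  intro A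
  induction A using Finset.strongInduction with
  | _ A ih =>
    intro hv hadj
    have hcard : (insert v A).card = A.card + 1 := Finset.card_insert_of_notMem hv
    rw [gdim]
    rw [if_neg (by omega)]
    rw [Finset.sum_attach _ (fun w => 1 + gdim G ((insert v A).filter (fun u => G.Adj w u)))]
    rw [Finset.sum_insert hv]
    have hfv : (insert v A).filter (fun u => G.Adj v u) = A := by
      ext u
      simp only [Finset.mem_filter, Finset.mem_insert]
      constructor
      · rintro ⟨h1 | h1, h2⟩
        · exact absurd (h1 ▸ h2) G.irrefl
        · exact h1
      · exact fun h => ⟨Or.inr h, hadj u h⟩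
    rw [hfv]
    have hfw : ∀ w ∈ A, (insert v A).filter (fun u => G.Adj w u)
        = insert v (A.filter (fun u => G.Adj w u)) := by
      intro w hw
      ext u
      simp only [Finset.mem_filter, Finset.mem_insert]
      constructor
      · rintro ⟨h1 | h1, h2⟩
        · exact Or.inl h1
        · exact Or.inr ⟨h1, h2⟩
      · rintro (rfl | ⟨h1, h2⟩)
        · exact ⟨Or.inl rfl, (hadj w hw).symm⟩
        · exact ⟨Or.inr h1, h2⟩
    have hsum : ∀ w ∈ A, (1 : ℚ) + gdim G ((insert v A).filter (fun u => G.Adj w u))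
        = 2 + gdim G (A.filter (fun u => G.Adj w u)) := by
      intro w hw
      rw [hfw w hw]
      have hss : A.filter (fun u => G.Adj w u) ⊂ A := by
        refine ⟨Finset.filter_subset _ _, fun hsub => ?_⟩
        have := hsub hw
        rw [Finset.mem_filter] at this
        exact G.irrefl this.2
      rw [ih _ hss (fun h => hv (Finset.filter_subset _ _ h))
        (fun u hu => hadj u (Finset.filter_subset _ _ hu))]
      ring
    rw [Finset.sum_congr rfl hsum]
    by_cases hA : A.card = 0
    · rw [Finset.card_eq_zero] at hA
      subst hA
      simp [gdim]
    · have hg : gdim G A = (A.card : ℚ)⁻¹ *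
          ∑ w ∈ A, (1 + gdim G (A.filter (fun u => G.Adj w u))) := by
        rw [gdim, if_neg hA,
          Finset.sum_attach _ (fun w => 1 + gdim G (A.filter (fun u => G.Adj w u)))]
      rw [hg]
      have h2 : ∑ w ∈ A, ((2 : ℚ) + gdim G (A.filter (fun u => G.Adj w u)))
          = (A.card : ℚ) + ∑ w ∈ A, (1 + gdim G (A.filter (fun u => G.Adj w u))) := by
        rw [Finset.sum_add_distrib, Finset.sum_add_distrib]
        simp
        ring
      rw [h2, hcard]
      have hn : (A.card : ℚ) ≠ 0 := by exact_mod_cast hA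
      have hn1 : ((A.card : ℚ) + 1) ≠ 0 := by positivity
      field_simp
      push_cast
      ring


/-- For every vertex `v` of a finite simple graph `G`, the
dimension of the unit ball at `v` (the induced subgraph on `v` together with
its neighbors) is one plus the dimension of the unit sphere at `v` (the
induced subgraph on the neighbors of `v`). -/
theorem dim_ball_eq_one_add_dim_sphere {V : Type*} [Fintype V] [DecidableEq V]
    (G : SimpleGraph V) [DecidableRel G.Adj] (v : V) :
    gdim G (insert v (Finset.univ.filter (fun u => G.Adj v u))) =
      1 + gdim G (Finset.univ.filter (fun u => G.Adj v u)) := by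
  apply gdim_cone
  · simp [G.irrefl]
  · intro u hu
    simpa using hu
end

section
/- Let V1 and V2 be nonempty finite vertex sets with V1 ⊄ V2 and V2 ⊄ V1, and let G be the graph on V1 ∪ V2 in which distinct vertices u, v are adjacent if and only if {u, v} ⊆ V1 or {u, v} ⊆ V2 (so G is the union of the two complete graphs K_{V1} and K_{V2}, which are its two maximal cliques). Then (|V1 ∪ V2| − |V1 ∩ V2|) · dim G = |V1 \ V2| · (|V1| − 1) + |V2 \ V1| · (|V2| − 1). -/
open Classical in
lemma gdim_complete {V : Type*} (G : SimpleGraph V) :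
    ∀ B : Finset V, (∀ u ∈ B, ∀ w ∈ B, (G.Adj u w ↔ u ≠ w)) →
      gdim G B = (B.card : ℚ) - 1 := by
  intro B
  induction B using Finset.strongInduction with
  | _ B ih =>
    intro hB
    rw [gdim]
    by_cases h0 : B.card = 0
    · simp [h0]
    · rw [if_neg h0]
      have key : ∀ v : {x // x ∈ B}, B.filter (fun u => G.Adj v.1 u) = B.erase v.1 := by
        intro v
        ext u
        simp only [Finset.mem_filter, Finset.mem_erase]
        constructor
        · rintro ⟨hu, hadj⟩
          exact ⟨((hB v.1 v.2 u hu).mp hadj).symm, hu⟩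
        · rintro ⟨hne, hu⟩
          exact ⟨hu, (hB v.1 v.2 u hu).mpr (Ne.symm hne)⟩
      have hsum : ∀ v : {x // x ∈ B}, (1 : ℚ) + gdim G (B.filter (fun u => G.Adj v.1 u)) = (B.card : ℚ) - 1 := by
        intro v
        rw [key v, ih (B.erase v.1) (Finset.erase_ssubset v.2)
          (fun u hu w hw => hB u (Finset.mem_of_mem_erase hu) w (Finset.mem_of_mem_erase hw))]
        rw [Finset.card_erase_of_mem v.2]
        have h1 : 1 ≤ B.card := Nat.one_le_iff_ne_zero.mpr h0
        push_cast [h1]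
        ring
      rw [Finset.sum_congr rfl (fun v _ => hsum v), Finset.sum_const, Finset.card_attach,
        nsmul_eq_mul]
      rw [inv_mul_cancel_left₀ (by exact_mod_cast h0)]

open Classical in
lemma gdim_two {V : Type*} [DecidableEq V] :
    ∀ (n : ℕ) (V1 V2 : Finset V) (G : SimpleGraph V),
      (V1 ∩ V2).card = n →
      (V1 \ V2).Nonempty → (V2 \ V1).Nonempty →
      (∀ u ∈ V1 ∪ V2, ∀ w ∈ V1 ∪ V2, (G.Adj u w ↔
        u ≠ w ∧ ((u ∈ V1 ∧ w ∈ V1) ∨ (u ∈ V2 ∧ w ∈ V2)))) →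
      gdim G (V1 ∪ V2) =
        (((V1 \ V2).card : ℚ) * ((V1.card : ℚ) - 1) +
         ((V2 \ V1).card : ℚ) * ((V2.card : ℚ) - 1)) /
        (((V1 \ V2).card : ℚ) + ((V2 \ V1).card : ℚ)) := by
  intro n
  induction n using Nat.strong_induction_on with
  | _ n ih =>
    intro V1 V2 G hn hne1 hne2 hG
    -- basic set facts
    set A := V1 ∪ V2 with hA
    have hcardA : A.card = (V1 \ V2).card + (V2 \ V1).card + (V1 ∩ V2).card := by
      have : A = (V1 \ V2) ∪ ((V2 \ V1) ∪ (V1 ∩ V2)) := by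
        ext x; simp only [hA, Finset.mem_union, Finset.mem_sdiff, Finset.mem_inter]; tauto
      rw [this, Finset.card_union_of_disjoint, Finset.card_union_of_disjoint]
      · ring
      · rw [Finset.disjoint_left]; intro x hx hx'
        simp only [Finset.mem_sdiff, Finset.mem_inter] at hx hx'; tauto
      · rw [Finset.disjoint_left]; intro x hx hx'
        simp only [Finset.mem_sdiff, Finset.mem_union, Finset.mem_inter] at hx hx'; tauto
    have hA0 : A.card ≠ 0 := by
      have : (V1 \ V2).card ≠ 0 := Finset.card_ne_zero_of_mem hne1.choose_spec
      omega
    -- sphere of v ∈ V1 \ V2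
    have sph1 : ∀ v ∈ V1 \ V2, A.filter (fun u => G.Adj v u) = V1.erase v := by
      intro v hv
      have hv1 : v ∈ V1 := (Finset.mem_sdiff.mp hv).1
      have hv2 : v ∉ V2 := (Finset.mem_sdiff.mp hv).2
      ext u
      simp only [Finset.mem_filter, Finset.mem_erase, hA, Finset.mem_union]
      constructor
      · rintro ⟨hu, hadj⟩
        have := (hG v (Finset.mem_union_left _ hv1) u (by simpa [hA] using hu)).mp hadj
        exact ⟨Ne.symm this.1, by tauto⟩
      · rintro ⟨hne, hu⟩
        refine ⟨Or.inl hu, (hG v (Finset.mem_union_left _ hv1) u (Finset.mem_union_left _ hu)).mpr ?_⟩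
        exact ⟨Ne.symm hne, Or.inl ⟨hv1, hu⟩⟩
    have sph2 : ∀ v ∈ V2 \ V1, A.filter (fun u => G.Adj v u) = V2.erase v := by
      intro v hv
      have hv2 : v ∈ V2 := (Finset.mem_sdiff.mp hv).1
      have hv1 : v ∉ V1 := (Finset.mem_sdiff.mp hv).2
      ext u
      simp only [Finset.mem_filter, Finset.mem_erase, hA, Finset.mem_union]
      constructor
      · rintro ⟨hu, hadj⟩
        have := (hG v (Finset.mem_union_right _ hv2) u (by simpa [hA] using hu)).mp hadj
        exact ⟨Ne.symm this.1, by tauto⟩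
      · rintro ⟨hne, hu⟩
        refine ⟨Or.inr hu, (hG v (Finset.mem_union_right _ hv2) u (Finset.mem_union_right _ hu)).mpr ?_⟩
        exact ⟨Ne.symm hne, Or.inr ⟨hv2, hu⟩⟩
    -- value on spheres of diff vertices
    have val1 : ∀ v ∈ V1 \ V2, (1:ℚ) + gdim G (A.filter (fun u => G.Adj v u)) = (V1.card : ℚ) - 1 := by
      intro v hv
      have hv1 : v ∈ V1 := (Finset.mem_sdiff.mp hv).1
      rw [sph1 v hv, gdim_complete G (V1.erase v) ?_, Finset.card_erase_of_mem hv1]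
      · have h1 : 1 ≤ V1.card := Finset.card_pos.mpr ⟨v, hv1⟩
        push_cast [h1]; ring
      · intro u hu w hw
        rw [hG u (Finset.mem_union_left _ (Finset.mem_of_mem_erase hu))
             w (Finset.mem_union_left _ (Finset.mem_of_mem_erase hw))]
        constructor
        · exact fun h => h.1
        · exact fun h => ⟨h, Or.inl ⟨Finset.mem_of_mem_erase hu, Finset.mem_of_mem_erase hw⟩⟩
    have val2 : ∀ v ∈ V2 \ V1, (1:ℚ) + gdim G (A.filter (fun u => G.Adj v u)) = (V2.card : ℚ) - 1 := by
      intro v hv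
      have hv2 : v ∈ V2 := (Finset.mem_sdiff.mp hv).1
      rw [sph2 v hv, gdim_complete G (V2.erase v) ?_, Finset.card_erase_of_mem hv2]
      · have h1 : 1 ≤ V2.card := Finset.card_pos.mpr ⟨v, hv2⟩
        push_cast [h1]; ring
      · intro u hu w hw
        rw [hG u (Finset.mem_union_right _ (Finset.mem_of_mem_erase hu))
             w (Finset.mem_union_right _ (Finset.mem_of_mem_erase hw))]
        constructor
        · exact fun h => h.1
        · exact fun h => ⟨h, Or.inr ⟨Finset.mem_of_mem_erase hu, Finset.mem_of_mem_erase hw⟩⟩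
    -- sphere of v ∈ V1 ∩ V2
    have sph3 : ∀ v ∈ V1 ∩ V2, A.filter (fun u => G.Adj v u) = (V1.erase v) ∪ (V2.erase v) := by
      intro v hv
      have hv1 : v ∈ V1 := (Finset.mem_inter.mp hv).1
      have hv2 : v ∈ V2 := (Finset.mem_inter.mp hv).2
      ext u
      simp only [Finset.mem_filter, Finset.mem_union, Finset.mem_erase, hA]
      constructor
      · rintro ⟨hu, hadj⟩
        have := (hG v (Finset.mem_union_left _ hv1) u (by simpa [hA] using hu)).mp hadj
        obtain ⟨hne, hcase⟩ := this
        rcases hcase with ⟨_, h⟩ | ⟨_, h⟩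
        · exact Or.inl ⟨Ne.symm hne, h⟩
        · exact Or.inr ⟨Ne.symm hne, h⟩
      · rintro (⟨hne, hu⟩ | ⟨hne, hu⟩)
        · exact ⟨Or.inl hu, (hG v (Finset.mem_union_left _ hv1) u
            (Finset.mem_union_left _ hu)).mpr ⟨Ne.symm hne, Or.inl ⟨hv1, hu⟩⟩⟩
        · exact ⟨Or.inr hu, (hG v (Finset.mem_union_right _ hv2) u
            (Finset.mem_union_right _ hu)).mpr ⟨Ne.symm hne, Or.inr ⟨hv2, hu⟩⟩⟩
    -- value on spheres of intersection vertices
    have val3 : ∀ v ∈ V1 ∩ V2, (1:ℚ) + gdim G (A.filter (fun u => G.Adj v u)) =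
        1 + (((V1 \ V2).card : ℚ) * (((V1.card : ℚ) - 1) - 1) +
             ((V2 \ V1).card : ℚ) * (((V2.card : ℚ) - 1) - 1)) /
            (((V1 \ V2).card : ℚ) + ((V2 \ V1).card : ℚ)) := by
      intro v hv
      have hv1 : v ∈ V1 := (Finset.mem_inter.mp hv).1
      have hv2 : v ∈ V2 := (Finset.mem_inter.mp hv).2
      have hd1 : (V1.erase v) \ (V2.erase v) = V1 \ V2 := by
        ext x
        by_cases hxv : x = v
        · subst hxv; simp [hv1, hv2]
        · simp [Finset.mem_sdiff, Finset.mem_erase, hxv]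
      have hd2 : (V2.erase v) \ (V1.erase v) = V2 \ V1 := by
        ext x
        by_cases hxv : x = v
        · subst hxv; simp [hv1, hv2]
        · simp [Finset.mem_sdiff, Finset.mem_erase, hxv]
      have hint : (V1.erase v) ∩ (V2.erase v) = (V1 ∩ V2).erase v := by
        ext x
        simp only [Finset.mem_inter, Finset.mem_erase]
        tauto
      have hm : ((V1.erase v) ∩ (V2.erase v)).card = n - 1 := by
        rw [hint, Finset.card_erase_of_mem hv, hn]
      have hn1 : 1 ≤ n := by
        rw [← hn]; exact Finset.card_pos.mpr ⟨v, hv⟩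
      have hlt : n - 1 < n := by omega
      have hGloc : ∀ u ∈ (V1.erase v) ∪ (V2.erase v), ∀ w ∈ (V1.erase v) ∪ (V2.erase v),
          (G.Adj u w ↔ u ≠ w ∧ ((u ∈ V1.erase v ∧ w ∈ V1.erase v) ∨
            (u ∈ V2.erase v ∧ w ∈ V2.erase v))) := by
        intro u hu w hw
        have huv : u ≠ v := by
          rcases Finset.mem_union.mp hu with h | h <;> exact (Finset.mem_erase.mp h).1
        have hwv : w ≠ v := by
          rcases Finset.mem_union.mp hw with h | h <;> exact (Finset.mem_erase.mp h).1
        have huA : u ∈ V1 ∪ V2 := by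
          rcases Finset.mem_union.mp hu with h | h
          · exact Finset.mem_union_left _ (Finset.mem_of_mem_erase h)
          · exact Finset.mem_union_right _ (Finset.mem_of_mem_erase h)
        have hwA : w ∈ V1 ∪ V2 := by
          rcases Finset.mem_union.mp hw with h | h
          · exact Finset.mem_union_left _ (Finset.mem_of_mem_erase h)
          · exact Finset.mem_union_right _ (Finset.mem_of_mem_erase h)
        rw [hG u huA w hwA]
        simp only [Finset.mem_erase]
        tauto
      have := ih (n - 1) hlt (V1.erase v) (V2.erase v) G hm
        (hd1 ▸ hne1) (hd2 ▸ hne2) hGloc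
      rw [sph3 v hv, this, hd1, hd2, Finset.card_erase_of_mem hv1, Finset.card_erase_of_mem hv2]
      have e1 : 1 ≤ V1.card := Finset.card_pos.mpr ⟨v, hv1⟩
      have e2 : 1 ≤ V2.card := Finset.card_pos.mpr ⟨v, hv2⟩
      push_cast [e1, e2]
      ring_nf
    -- assemble
    rw [gdim, if_neg hA0]
    rw [Finset.sum_attach A (fun v => (1:ℚ) + gdim G (A.filter (fun u => G.Adj v u)))]
    have hsplit : A = (V1 \ V2) ∪ ((V2 \ V1) ∪ (V1 ∩ V2)) := by
      ext x; simp only [hA, Finset.mem_union, Finset.mem_sdiff, Finset.mem_inter]; tauto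
    have hdisj1 : Disjoint (V2 \ V1) (V1 ∩ V2) := by
      rw [Finset.disjoint_left]; intro x hx hx'
      simp only [Finset.mem_sdiff, Finset.mem_inter] at hx hx'; tauto
    have hdisj2 : Disjoint (V1 \ V2) ((V2 \ V1) ∪ (V1 ∩ V2)) := by
      rw [Finset.disjoint_left]; intro x hx hx'
      simp only [Finset.mem_sdiff, Finset.mem_union, Finset.mem_inter] at hx hx'; tauto
    rw [Finset.sum_congr hsplit (fun _ _ => rfl), Finset.sum_union hdisj2,
        Finset.sum_union hdisj1, Finset.sum_congr rfl val1, Finset.sum_congr rfl val2,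
        Finset.sum_congr rfl val3, Finset.sum_const, Finset.sum_const, Finset.sum_const]
    have ha : (0:ℚ) < ((V1 \ V2).card : ℚ) := by exact_mod_cast Finset.card_pos.mpr hne1
    have hb : (0:ℚ) < ((V2 \ V1).card : ℚ) := by exact_mod_cast Finset.card_pos.mpr hne2
    have hi : (0:ℚ) ≤ ((V1 ∩ V2).card : ℚ) := by positivity
    have hab : ((V1 \ V2).card : ℚ) + ((V2 \ V1).card : ℚ) ≠ 0 := ne_of_gt (by linarith)
    have hden : ((V1 \ V2).card : ℚ) + ((V2 \ V1).card : ℚ) + ((V1 ∩ V2).card : ℚ) ≠ 0 :=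
      ne_of_gt (by linarith)
    rw [hcardA, hn]
    rw [← hn]
    push_cast
    rw [nsmul_eq_mul, nsmul_eq_mul, nsmul_eq_mul]
    field_simp
    ring

/-- Let `V1, V2` be nonempty finite vertex sets, neither
contained in the other, and let `G` be the graph in which distinct vertices
are adjacent iff both lie in `V1` or both lie in `V2` (the union of the two
complete graphs `K_{V1}` and `K_{V2}`), considered on the vertex set
`V1 ∪ V2`. Then
`(|V1 ∪ V2| − |V1 ∩ V2|) · dim G = |V1 \ V2|·(|V1| − 1) + |V2 \ V1|·(|V2| − 1)`. -/
theorem dim_two_cliques {V : Type*} [DecidableEq V] (V1 V2 : Finset V)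
    (h1 : V1.Nonempty) (h2 : V2.Nonempty)
    (h12 : ¬ V1 ⊆ V2) (h21 : ¬ V2 ⊆ V1)
    (G : SimpleGraph V)
    (hG : ∀ u v, G.Adj u v ↔
      u ≠ v ∧ ((u ∈ V1 ∧ v ∈ V1) ∨ (u ∈ V2 ∧ v ∈ V2))) :
    (((V1 ∪ V2).card : ℚ) - ((V1 ∩ V2).card : ℚ)) * gdim G (V1 ∪ V2) =
      ((V1 \ V2).card : ℚ) * ((V1.card : ℚ) - 1) +
        ((V2 \ V1).card : ℚ) * ((V2.card : ℚ) - 1) := by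
  obtain ⟨x, hx1, hx2⟩ := Finset.not_subset.mp h12
  obtain ⟨y, hy2, hy1⟩ := Finset.not_subset.mp h21
  have hne1 : (V1 \ V2).Nonempty := ⟨x, Finset.mem_sdiff.mpr ⟨hx1, hx2⟩⟩
  have hne2 : (V2 \ V1).Nonempty := ⟨y, Finset.mem_sdiff.mpr ⟨hy2, hy1⟩⟩
  rw [gdim_two ((V1 ∩ V2).card) V1 V2 G rfl hne1 hne2 (fun u _ w _ => hG u w)]
  have hcardA : (V1 ∪ V2).card = (V1 \ V2).card + (V2 \ V1).card + (V1 ∩ V2).card := by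
    have h : V1 ∪ V2 = (V1 \ V2) ∪ ((V2 \ V1) ∪ (V1 ∩ V2)) := by
      ext z; simp only [Finset.mem_union, Finset.mem_sdiff, Finset.mem_inter]; tauto
    rw [h, Finset.card_union_of_disjoint, Finset.card_union_of_disjoint]
    · ring
    · rw [Finset.disjoint_left]; intro z hz hz'
      simp only [Finset.mem_sdiff, Finset.mem_inter] at hz hz'; tauto
    · rw [Finset.disjoint_left]; intro z hz hz'
      simp only [Finset.mem_sdiff, Finset.mem_union, Finset.mem_inter] at hz hz'; tauto
  have ha : (0:ℚ) < ((V1 \ V2).card : ℚ) := by exact_mod_cast Finset.card_pos.mpr hne1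
  have hb : (0:ℚ) < ((V2 \ V1).card : ℚ) := by exact_mod_cast Finset.card_pos.mpr hne2
  have hab : ((V1 \ V2).card : ℚ) + ((V2 \ V1).card : ℚ) ≠ 0 := ne_of_gt (by linarith)
  rw [hcardA]
  push_cast
  field_simp
  ring
end

section
/- Let G be a nonempty finite simple graph with clique number ω(G) = k (the maximum number of vertices in a clique of G). Then dim G ≤ k − 1. -/
open Classical in
lemma gdim_le_of_clique_bound {V : Type*} (G : SimpleGraph V) :
    ∀ (n : ℕ) (A : Finset V), A.card = n → ∀ (m : ℕ),
    (∀ s : Finset V, s ⊆ A → G.IsClique s → s.card ≤ m) →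
    gdim G A ≤ (m : ℚ) - 1 := by
  intro n
  induction n using Nat.strong_induction_on with
  | _ n ih =>
    intro A hA m hm
    rw [gdim]
    by_cases h0 : A.card = 0
    · rw [if_pos h0]
      have : (0:ℚ) ≤ m := by positivity
      linarith
    · rw [if_neg h0]
      obtain ⟨v0, hv0⟩ := Finset.card_pos.mp (Nat.pos_of_ne_zero h0)
      have hm1 : 1 ≤ m := by
        have := hm {v0} (by simpa using hv0) (by simp [SimpleGraph.isClique_singleton])
        simpa using this
      have hsum : ∑ v ∈ A.attach, (1 + gdim G (A.filter (fun u => G.Adj v.1 u)))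
          ≤ ∑ _v ∈ A.attach, ((m : ℚ) - 1) := by
        apply Finset.sum_le_sum
        intro v _
        have hBsub : A.filter (fun u => G.Adj v.1 u) ⊂ A := by
          refine ⟨Finset.filter_subset _ _, fun hsub => ?_⟩
          have hv := hsub v.2
          rw [Finset.mem_filter] at hv
          exact G.irrefl hv.2
        have hcard : (A.filter (fun u => G.Adj v.1 u)).card < n := by
          rw [← hA]; exact Finset.card_lt_card hBsub
        have hB := ih _ hcard _ rfl (m - 1) ?_
        · have : (((m:ℕ) - 1 : ℕ) : ℚ) = (m : ℚ) - 1 := by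
            push_cast [Nat.cast_sub hm1]; ring
          rw [this] at hB
          linarith
        · intro s hs hsc
          have hvns : v.1 ∉ s := fun hvs => G.irrefl
            ((Finset.mem_filter.mp (hs hvs)).2)
          have hclique : G.IsClique (insert v.1 (s : Set V)) := by
            apply hsc.insert
            intro b hb _
            exact (Finset.mem_filter.mp (hs hb)).2
          have hins : (insert v.1 s : Finset V).card ≤ m := by
            apply hm _ _ (by simpa using hclique)
            intro x hx
            rcases Finset.mem_insert.mp hx with h | h
            · exact h ▸ v.2
            · exact (Finset.filter_subset _ _) (hs h)
          rw [Finset.card_insert_of_notMem hvns] at hins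
          omega
      calc (A.card : ℚ)⁻¹ * ∑ v ∈ A.attach, (1 + gdim G (A.filter (fun u => G.Adj v.1 u)))
          ≤ (A.card : ℚ)⁻¹ * ∑ _v ∈ A.attach, ((m : ℚ) - 1) := by
            apply mul_le_mul_of_nonneg_left hsum
            positivity
        _ = (m : ℚ) - 1 := by
            rw [Finset.sum_const, Finset.card_attach, nsmul_eq_mul]
            field_simp

/-- A nonempty finite simple graph with clique number `k`
has inductive dimension at most `k − 1`. -/
theorem dim_le_cliqueNum_sub_one {V : Type*} [Fintype V] [Nonempty V]
    (G : SimpleGraph V) (k : ℕ) (hk : G.cliqueNum = k) :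
    gdim G Finset.univ ≤ (k : ℚ) - 1 := by
  apply gdim_le_of_clique_bound G _ _ rfl
  intro s _ hsc
  rw [← hk]
  exact SimpleGraph.IsClique.card_le_cliqueNum (tc := hsc)
end

section
/- Let G be a nonempty finite simple graph and let γ(G) denote its minimum clique number, i.e., the minimum cardinality of a maximal clique of G. Then dim G ≥ γ(G) − 1. -/
/-- The minimum clique number `γ(G)`: the minimum cardinality of a maximal
clique of `G`. -/
noncomputable def minCliqueNum {V : Type*} [Fintype V] (G : SimpleGraph V) : ℕ :=
  sInf {n | ∃ s : Finset V, G.IsClique (s : Set V) ∧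
    (∀ t : Finset V, G.IsClique (t : Set V) → s ⊆ t → t = s) ∧ s.card = n}

open Classical

/-- Relative minimum maximal-clique number inside a finset `A`. -/
noncomputable def mcnRel {V : Type*} (G : SimpleGraph V) (A : Finset V) : ℕ :=
  sInf {n | ∃ s : Finset V, s ⊆ A ∧ G.IsClique (s : Set V) ∧
    (∀ t : Finset V, t ⊆ A → G.IsClique (t : Set V) → s ⊆ t → t = s) ∧ s.card = n}

lemma mcnRel_set_nonempty {V : Type*} (G : SimpleGraph V) (A : Finset V) :
    {n | ∃ s : Finset V, s ⊆ A ∧ G.IsClique (s : Set V) ∧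
      (∀ t : Finset V, t ⊆ A → G.IsClique (t : Set V) → s ⊆ t → t = s) ∧
      s.card = n}.Nonempty := by
  classical
  obtain ⟨m, hm, hmax⟩ : ∃ m ∈ (A.powerset).filter (fun s : Finset V => G.IsClique (s : Set V)),
      ∀ x ∈ (A.powerset).filter (fun s : Finset V => G.IsClique (s : Set V)), ¬ m < x := by
    obtain ⟨m, hm, hmax⟩ := Finset.exists_maximal
      (s := (A.powerset).filter (fun s : Finset V => G.IsClique (s : Set V)))
      ⟨∅, by simp⟩
    exact ⟨m, hm, fun x hx hlt => hlt.not_ge (hmax hx hlt.le)⟩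
  simp only [Finset.mem_filter, Finset.mem_powerset] at hm
  refine ⟨m.card, m, hm.1, hm.2, ?_, rfl⟩
  intro t htA htc hst
  by_contra hne
  exact hmax t (by simp [Finset.mem_filter, Finset.mem_powerset, htA, htc])
    (lt_of_le_of_ne hst (fun h => hne h.symm))

lemma mcnRel_le_sphere {V : Type*} (G : SimpleGraph V) {A : Finset V} {v : V}
    (hv : v ∈ A) :
    mcnRel G A ≤ mcnRel G (A.filter (fun u => G.Adj v u)) + 1 := by
  classical
  set B := A.filter (fun u => G.Adj v u) with hB
  obtain ⟨s, hsB, hsc, hsmax, hcard⟩ := Nat.sInf_mem (mcnRel_set_nonempty G B)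
  have hvs : v ∉ s := fun h => G.irrefl ((Finset.mem_filter.mp (hsB h)).2)
  apply Nat.sInf_le
  refine ⟨insert v s, ?_, ?_, ?_, ?_⟩
  · intro x hx
    rcases Finset.mem_insert.mp hx with rfl | hx
    · exact hv
    · exact Finset.filter_subset _ _ (hsB hx)
  · rw [Finset.coe_insert]
    apply hsc.insert
    intro u hu _
    exact (Finset.mem_filter.mp (hsB hu)).2
  · intro t htA htc hins
    have hvt : v ∈ t := hins (Finset.mem_insert_self v s)
    have h1 : t.erase v ⊆ B := by
      intro u hu
      have hu' := Finset.mem_erase.mp hu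
      refine Finset.mem_filter.mpr ⟨htA hu'.2, ?_⟩
      exact htc (by exact_mod_cast hvt) (by exact_mod_cast hu'.2) (Ne.symm hu'.1)
    have h2 : s ⊆ t.erase v := fun u hu =>
      Finset.mem_erase.mpr ⟨fun h => hvs (h ▸ hu), hins (Finset.mem_insert_of_mem hu)⟩
    have h3 : t.erase v = s :=
      hsmax _ h1 (htc.subset (by exact_mod_cast Finset.erase_subset v t)) h2
    rw [← Finset.insert_erase hvt, h3]
  · rw [Finset.card_insert_of_notMem hvs, hcard]
    rfl

lemma mcnRel_sub_one_le_gdim {V : Type*} (G : SimpleGraph V) (A : Finset V) :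
    (mcnRel G A : ℚ) - 1 ≤ gdim G A := by
  classical
  induction A using Finset.strongInductionOn with
  | _ A ih =>
  rcases eq_or_ne A ∅ with rfl | hne
  · have h0 : mcnRel G (∅ : Finset V) = 0 := by
      apply Nat.le_antisymm _ (Nat.zero_le _)
      exact Nat.sInf_le ⟨∅, Finset.Subset.refl _, by simp,
        fun t ht _ _ => Finset.subset_empty.mp ht, rfl⟩
    rw [gdim]
    simp [h0]
  · have hcne : A.card ≠ 0 := by simpa [Finset.card_eq_zero] using hne
    have hcpos : (0 : ℚ) < A.card := by
      exact_mod_cast Nat.pos_of_ne_zero hcne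
    rw [gdim, if_neg hcne]
    have hterm : ∀ v ∈ A.attach,
        (mcnRel G A : ℚ) - 1 ≤ 1 + gdim G (A.filter (fun u => G.Adj v.1 u)) := by
      intro v _
      have hss : A.filter (fun u => G.Adj v.1 u) ⊂ A := by
        refine ⟨Finset.filter_subset _ _, fun hsub => ?_⟩
        have hv := hsub v.2
        rw [Finset.mem_filter] at hv
        exact G.irrefl hv.2
      have h1 := ih _ hss
      have h2 := mcnRel_le_sphere G v.2
      have h2' : (mcnRel G A : ℚ) ≤
          (mcnRel G (A.filter (fun u => G.Adj v.1 u)) : ℚ) + 1 := by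
        exact_mod_cast h2
      linarith
    have hsum : (A.card : ℚ) * ((mcnRel G A : ℚ) - 1) ≤
        ∑ v ∈ A.attach, (1 + gdim G (A.filter (fun u => G.Adj v.1 u))) := by
      have := Finset.card_nsmul_le_sum A.attach _ _ hterm
      simpa [Finset.card_attach, nsmul_eq_mul] using this
    calc (mcnRel G A : ℚ) - 1
        = (A.card : ℚ)⁻¹ * ((A.card : ℚ) * ((mcnRel G A : ℚ) - 1)) := by
          field_simp
      _ ≤ (A.card : ℚ)⁻¹ *
          ∑ v ∈ A.attach, (1 + gdim G (A.filter (fun u => G.Adj v.1 u))) := by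
          exact mul_le_mul_of_nonneg_left hsum (by positivity)

/-- A nonempty finite simple graph satisfies
`dim G ≥ γ(G) − 1`, where `γ(G)` is the minimum cardinality of a maximal
clique of `G`. -/
theorem minCliqueNum_sub_one_le_dim {V : Type*} [Fintype V] [Nonempty V]
    (G : SimpleGraph V) :
    (minCliqueNum G : ℚ) - 1 ≤ gdim G Finset.univ := by
  have h : minCliqueNum G = mcnRel G Finset.univ := by
    unfold minCliqueNum mcnRel
    congr 1
    ext n
    constructor
    · rintro ⟨s, hc, hmax, hn⟩
      exact ⟨s, Finset.subset_univ _, hc, fun t _ htc hst => hmax t htc hst, hn⟩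
    · rintro ⟨s, _, hc, hmax, hn⟩
      exact ⟨s, hc, fun t htc hst => hmax t (Finset.subset_univ _) htc hst, hn⟩
  rw [h]
  exact mcnRel_sub_one_le_gdim G Finset.univ
end

section
/- For every k ≥ 1, the complete k-partite graph whose k parts are all nonempty has inductive dimension k − 1. -/
lemma gdim_biUnion_parts {V : Type*} [DecidableEq V]
    (k : ℕ) (P : Fin k → Finset V)
    (hne : ∀ i, (P i).Nonempty)
    (hdisj : ∀ i j, i ≠ j → Disjoint (P i) (P j))
    (G : SimpleGraph V)
    (hG : ∀ u v : V, G.Adj u v ↔ ∃ i j, i ≠ j ∧ u ∈ P i ∧ v ∈ P j)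
    (S : Finset (Fin k)) : gdim G (S.biUnion P) = (S.card : ℚ) - 1 := by
  classical
  induction S using Finset.strongInduction with
  | _ S ih =>
    have huniq : ∀ w a b, w ∈ P a → w ∈ P b → a = b := by
      intro w a b ha hb
      by_contra h
      exact Finset.disjoint_left.mp (hdisj a b h) ha hb
    by_cases hS : S = ∅
    · subst hS; simp [gdim]
    · have hA : (S.biUnion P).card ≠ 0 := by
        obtain ⟨i, hi⟩ := Finset.nonempty_iff_ne_empty.mpr hS
        obtain ⟨v, hv⟩ := hne i
        have : v ∈ S.biUnion P := Finset.mem_biUnion.mpr ⟨i, hi, hv⟩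
        exact Finset.card_ne_zero_of_mem this
      rw [gdim, if_neg hA]
      have hterm : ∀ v : {x // x ∈ S.biUnion P},
          1 + gdim G ((S.biUnion P).filter (fun u => G.Adj v.1 u))
            = (S.card : ℚ) - 1 := by
        rintro ⟨v, hv⟩
        obtain ⟨i, hiS, hvi⟩ := Finset.mem_biUnion.mp hv
        have hfilt : (S.biUnion P).filter (fun u => G.Adj v u)
            = (S.erase i).biUnion P := by
          ext u
          simp only [Finset.mem_filter, Finset.mem_biUnion, Finset.mem_erase,
            hG v u]
          constructor
          · rintro ⟨⟨j, hjS, hju⟩, a, b, hab, hva, hub⟩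
            have ha : a = i := huniq v a i hva hvi
            have hb : b = j := huniq u b j hub hju
            exact ⟨j, ⟨fun h => hab (by rw [ha, hb, h]), hjS⟩, hju⟩
          · rintro ⟨j, ⟨hji, hjS⟩, hju⟩
            exact ⟨⟨j, hjS, hju⟩, i, j, fun h => hji (h.symm), hvi, hju⟩
        rw [hfilt, ih _ (Finset.erase_ssubset hiS),
          Finset.card_erase_of_mem hiS]
        have h1 : 1 ≤ S.card := Finset.card_pos.mpr
          (Finset.nonempty_iff_ne_empty.mpr hS)
        push_cast [Nat.cast_sub h1]
        ring
      rw [Finset.sum_congr rfl (fun v _ => hterm v), Finset.sum_const,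
        Finset.card_attach, nsmul_eq_mul, ← mul_assoc,
        inv_mul_cancel₀ (by exact_mod_cast hA), one_mul]

/-- For every `k ≥ 1`, the complete `k`-partite graph on
nonempty parts `P 0, …, P (k-1)` (two vertices adjacent iff they lie in
distinct parts) has inductive dimension `k − 1`. -/
theorem dim_complete_multipartite {V : Type*} [Fintype V] [DecidableEq V]
    (k : ℕ) (hk : 1 ≤ k) (P : Fin k → Finset V)
    (hne : ∀ i, (P i).Nonempty)
    (hdisj : ∀ i j, i ≠ j → Disjoint (P i) (P j))
    (hcover : Finset.univ.biUnion P = (Finset.univ : Finset V))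
    (G : SimpleGraph V)
    (hG : ∀ u v : V, G.Adj u v ↔ ∃ i j, i ≠ j ∧ u ∈ P i ∧ v ∈ P j) :
    gdim G Finset.univ = (k : ℚ) - 1 := by
  rw [← hcover, gdim_biUnion_parts k P hne hdisj G hG]
  simp
end
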